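/- Let λ be a weakly decreasing sequence of n nonnegative integers and μ a weakly decreasing sequence of n-2 nonnegative integers doubly interlacing λ. Let (x₁, z₁, ..., x_{n-1}, z_{n-1}) be the weakly decreasing rearrangement of (λ₁,...,λ_n, μ₁,...,μ_{n-2}). Then, as Laurent polynomials in t₁, t₂: Σ_{κ: μ ⊑ κ ⊑ λ} t₁^{|κ|-|μ|} t₂^{|λ|-|κ|} = (t₁t₂)^{-|μ|} · ∏_{j=1}^{n-1} (Σ_{y=z_j}^{x_j} t₁^y t₂^{x_j+z_j-y}), where |σ| denotes the sum of the entries of σ. -/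

import Mathlib

/-- `a` is a weakly decreasing sequence of length `k` (entries `a 0, …, a (k-1)`). -/
def WeaklyDecr (k : ℕ) (a : ℕ → ℤ) : Prop :=
  ∀ i : ℕ, i + 1 < k → a (i + 1) ≤ a i

/-- The entries `a 0, …, a (k-1)` are nonnegative. -/
def NonnegSeq (k : ℕ) (a : ℕ → ℤ) : Prop :=
  ∀ i : ℕ, i < k → 0 ≤ a i

/-- `Interlaces k β α` : the length-`(k-1)` sequence `β` interlaces the length-`k`
sequence `α`, i.e. `α 0 ≥ β 0 ≥ α 1 ≥ β 1 ≥ ⋯ ≥ β (k-2) ≥ α (k-1)`. -/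
def Interlaces (k : ℕ) (β α : ℕ → ℤ) : Prop :=
  ∀ i : ℕ, i + 1 < k → β i ≤ α i ∧ α (i + 1) ≤ β i

/-- `μ` (length `n-2`) doubly interlaces `lam` (length `n`):
there is a weakly decreasing `κ` of length `n-1` with `μ ⊑ κ ⊑ lam`. -/
def DoublyInterlaces (n : ℕ) (μ lam : ℕ → ℤ) : Prop :=
  ∃ κ : ℕ → ℤ, WeaklyDecr (n - 1) κ ∧ Interlaces n κ lam ∧ Interlaces (n - 1) μ κ

/-- `s` is the weakly decreasing rearrangement
`(x₁, z₁, …, x_{n-1}, z_{n-1})` (with `x j = s (2*j)`, `z j = s (2*j+1)` in 0-based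
indexing) of the concatenation of `lam` (length `n`) and `μ` (length `n-2`). -/
def Rearr (n : ℕ) (lam μ s : ℕ → ℤ) : Prop :=
  WeaklyDecr (2 * n - 2) s ∧
    ((List.range (2 * n - 2)).map s).Perm
      (((List.range n).map lam) ++ ((List.range (n - 2)).map μ))

/-- Entry access for a length-`k` tuple, with default `0` out of range. -/
def fget {k : ℕ} (a : Fin k → ℤ) (i : ℕ) : ℤ := if h : i < k then a ⟨i, h⟩ else 0

open LaurentPolynomial

/-- The monomial `t₁^a t₂^b`, in the ring of Laurent polynomials in `t₁, t₂`
(realized as iterated Laurent polynomials over `ℤ`). -/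
noncomputable def tMon (a b : ℤ) : LaurentPolynomial (LaurentPolynomial ℤ) :=
  LaurentPolynomial.C (T a) * T b


/-!
The conditions `μ ⊑ κ ⊑ λ` say exactly that every `κ j` lies in `[z_j, x_j]`, where
`x_j = min (λ j) (μ (j - 1))` and `z_j = max (λ (j + 1)) (μ j)` (a missing `μ` entry at either end
is dropped), independently of the other entries; weak decrease of `κ` is then automatic.
Since `{x_{j+1}, z_j} = {λ (j + 1), μ j}`, the sequence `x_0, z_0, x_1, z_1, …` is a rearrangement
of `λ ∪ μ`; it is weakly decreasing because `z_j ≤ κ₀ j ≤ x_j` for any witness `κ₀` of double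
interlacing and `x_{j+1} ≤ z_j` always. Hence it is `s`, and the character is a sum of monomials
over a box, which factors into the product of the one-variable sums over `[z_j, x_j]`.
-/

lemma tMon_add (a b c d : ℤ) : tMon (a + c) (b + d) = tMon a b * tMon c d := by
  simp only [tMon, T_add, map_mul]
  ring

lemma prod_tMon {ι : Type*} (s : Finset ι) (a b : ι → ℤ) :
    ∏ j ∈ s, tMon (a j) (b j) = tMon (∑ j ∈ s, a j) (∑ j ∈ s, b j) := by
  induction s using Finset.cons_induction with
  | empty => simp [tMon, T_zero]
  | cons i s hi ih => rw [Finset.prod_cons, Finset.sum_cons, Finset.sum_cons, tMon_add, ih]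

lemma Finset.sum_Icc_prod_eq_prod_sum_Icc {ι α R : Type*} [Fintype ι] [DecidableEq ι]
    [DecidableEq α] [PartialOrder α] [LocallyFiniteOrder α] [CommSemiring R] (a b : ι → α)
    (f : ι → α → R) :
    ∑ κ ∈ Finset.Icc a b, ∏ j, f j (κ j) = ∏ j, ∑ y ∈ Finset.Icc (a j) (b j), f j y := by
  rw [Pi.Icc_eq, Finset.prod_univ_sum]

lemma Multiset.map_min_add_map_max {ι α : Type*} [LinearOrder α] (s : Multiset ι) (f g : ι → α) :
    s.map (fun i => min (f i) (g i)) + s.map (fun i => max (f i) (g i)) = s.map f + s.map g := by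
  induction s using Multiset.induction_on with
  | empty => rfl
  | cons i s ih =>
    simp only [Multiset.map_cons, Multiset.cons_add, Multiset.add_cons, ih]
    rcases le_total (f i) (g i) with h | h
    · rw [min_eq_left h, max_eq_right h]
    · rw [min_eq_right h, max_eq_left h, Multiset.cons_swap]

lemma Multiset.map_range_succ' {α : Type*} (f : ℕ → α) (n : ℕ) :
    (Multiset.range (n + 1)).map f = f 0 ::ₘ (Multiset.range n).map (fun i => f (i + 1)) := by
  rw [← Multiset.coe_range, Multiset.map_coe, List.range_succ_eq_map, List.map_cons, List.map_map]
  rfl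

lemma Interlaces.weaklyDecr {k : ℕ} {β α : ℕ → ℤ} (h : Interlaces k β α) : WeaklyDecr k α :=
  fun i hi => (h i hi).2.trans (h i hi).1

lemma WeaklyDecr.eq_of_map_range_eq {k : ℕ} {s t : ℕ → ℤ} (hs : WeaklyDecr k s)
    (ht : WeaklyDecr k t) (h : (Multiset.range k).map s = (Multiset.range k).map t) :
    ∀ i < k, s i = t i := by
  have pairwise_ge {u : ℕ → ℤ} (hu : WeaklyDecr k u) : ((List.range k).map u).Pairwise (· ≥ ·) := by
    rw [← List.isChain_iff_pairwise, List.isChain_map]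
    cases k with
    | zero => simp
    | succ k => exact (List.isChain_range_succ _ _).2 fun i hi => hu i (by omega)
  have hlist : (List.range k).map s = (List.range k).map t :=
    List.Perm.eq_of_pairwise (fun a b _ _ hab hba => le_antisymm hba hab)
      (pairwise_ge hs) (pairwise_ge ht) (Multiset.coe_eq_coe.1 h)
  intro i hi
  simpa [List.getElem?_range hi] using congrArg (·[i]?) hlist

def interleave (x z : ℕ → ℤ) (i : ℕ) : ℤ := if i % 2 = 0 then x (i / 2) else z (i / 2)

@[simp] lemma interleave_two_mul (x z : ℕ → ℤ) (j : ℕ) : interleave x z (2 * j) = x j := by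
  simp [interleave]

@[simp] lemma interleave_two_mul_add_one (x z : ℕ → ℤ) (j : ℕ) :
    interleave x z (2 * j + 1) = z j := by
  simp [interleave, Nat.add_mod, show (2 * j + 1) / 2 = j by omega]

lemma map_range_interleave (x z : ℕ → ℤ) (m : ℕ) :
    (Multiset.range (2 * m)).map (interleave x z) =
      (Multiset.range m).map x + (Multiset.range m).map z := by
  induction m with
  | zero => rfl
  | succ m ih =>
    rw [show 2 * (m + 1) = 2 * m + 1 + 1 by ring, Multiset.range_succ, Multiset.range_succ,
      Multiset.map_cons, Multiset.map_cons, ih, Multiset.range_succ, Multiset.map_cons,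
      Multiset.map_cons, interleave_two_mul, interleave_two_mul_add_one, Multiset.cons_add,
      Multiset.add_cons, Multiset.cons_swap]

lemma weaklyDecr_interleave {m : ℕ} {x z : ℕ → ℤ} (hzx : ∀ j < m, z j ≤ x j)
    (hxz : ∀ j, j + 1 < m → x (j + 1) ≤ z j) : WeaklyDecr (2 * m) (interleave x z) := by
  intro i hi
  rcases Nat.even_or_odd' i with ⟨j, rfl | rfl⟩
  · simpa using hzx j (by omega)
  · simpa [show 2 * j + 1 + 1 = 2 * (j + 1) by ring] using hxz j (by omega)

def interlaceHi (lam mu : ℕ → ℤ) : ℕ → ℤ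
  | 0 => lam 0
  | j + 1 => min (lam (j + 1)) (mu j)

def interlaceLo (q : ℕ) (lam mu : ℕ → ℤ) (j : ℕ) : ℤ :=
  if j = q then lam (q + 1) else max (lam (j + 1)) (mu j)

section Interlace

variable {q : ℕ} {lam mu : ℕ → ℤ}

lemma interlaceHi_le (j : ℕ) : interlaceHi lam mu j ≤ lam j := by
  cases j with
  | zero => exact le_rfl
  | succ j => exact min_le_left _ _

lemma interlaceHi_succ_le (j : ℕ) : interlaceHi lam mu (j + 1) ≤ mu j := min_le_right _ _

lemma le_interlaceLo (j : ℕ) : lam (j + 1) ≤ interlaceLo q lam mu j := by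
  unfold interlaceLo
  split_ifs with hj
  · rw [hj]
  · exact le_max_left _ _

lemma le_interlaceLo_of_ne {j : ℕ} (hj : j ≠ q) : mu j ≤ interlaceLo q lam mu j := by
  rw [interlaceLo, if_neg hj]
  exact le_max_right _ _

lemma interlaceHi_succ_le_interlaceLo {j : ℕ} (hj : j ≠ q) :
    interlaceHi lam mu (j + 1) ≤ interlaceLo q lam mu j := by
  rw [interlaceLo, if_neg hj]
  exact min_le_max

lemma interlaces_and_interlaces_iff (κ : ℕ → ℤ) :
    Interlaces (q + 2) κ lam ∧ Interlaces (q + 1) mu κ ↔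
      ∀ j < q + 1, interlaceLo q lam mu j ≤ κ j ∧ κ j ≤ interlaceHi lam mu j := by
  constructor
  · rintro ⟨hκlam, hmuκ⟩ j hj
    constructor
    · unfold interlaceLo
      split_ifs with hjq
      · subst hjq
        exact (hκlam j (by omega)).2
      · exact max_le (hκlam j (by omega)).2 (hmuκ j (by omega)).1
    · cases j with
      | zero => exact (hκlam 0 (by omega)).1
      | succ j => exact le_min (hκlam (j + 1) (by omega)).1 (hmuκ j (by omega)).2
  · intro h
    refine ⟨fun i hi => ⟨?_, ?_⟩, fun i hi => ⟨?_, ?_⟩⟩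
    · exact (h i (by omega)).2.trans (interlaceHi_le i)
    · exact (le_interlaceLo i).trans (h i (by omega)).1
    · exact (le_interlaceLo_of_ne (by omega)).trans (h i (by omega)).1
    · exact (h (i + 1) hi).2.trans (interlaceHi_succ_le i)

lemma forall_lt_fget_mem_Icc_iff {k : ℕ} (κ : Fin k → ℤ) (lo hi : ℕ → ℤ) :
    (∀ j < k, lo j ≤ fget κ j ∧ fget κ j ≤ hi j) ↔
      (fun j : Fin k => lo j) ≤ κ ∧ κ ≤ fun j : Fin k => hi j := by
  simp only [Pi.le_def, Fin.forall_iff, fget]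
  constructor
  · intro h
    exact ⟨fun j hj => by simpa [hj] using (h j hj).1, fun j hj => by simpa [hj] using (h j hj).2⟩
  · intro h j hj
    simpa [hj] using ⟨h.1 j hj, h.2 j hj⟩

open Classical in
lemma filter_interlacing_eq_Icc :
    {κ ∈ Finset.Icc (fun j : Fin (q + 1) => lam (j + 1)) (fun j => lam j) |
        WeaklyDecr (q + 1) (fget κ) ∧ Interlaces (q + 2) (fget κ) lam ∧
          Interlaces (q + 1) mu (fget κ)} =
      Finset.Icc (fun j : Fin (q + 1) => interlaceLo q lam mu j)
        (fun j => interlaceHi lam mu j) := by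
  ext κ
  rw [Finset.mem_filter, Finset.mem_Icc, Finset.mem_Icc,
    ← forall_lt_fget_mem_Icc_iff κ (fun j => lam (j + 1)) lam, ← forall_lt_fget_mem_Icc_iff,
    ← interlaces_and_interlaces_iff]
  constructor
  · exact fun h => h.2.2
  · intro h
    refine ⟨fun j hj => ⟨?_, ?_⟩, h.2.weaklyDecr, h⟩
    · exact (le_interlaceLo j).trans (((interlaces_and_interlaces_iff _).1 h j hj).1)
    · exact (((interlaces_and_interlaces_iff _).1 h j hj).2).trans (interlaceHi_le j)

end Interlace

lemma map_interlaceHi_add_map_interlaceLo (q : ℕ) (lam mu : ℕ → ℤ) :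
    (Multiset.range (q + 1)).map (interlaceHi lam mu) +
        (Multiset.range (q + 1)).map (interlaceLo q lam mu) =
      (Multiset.range (q + 2)).map lam + (Multiset.range q).map mu := by
  have hlo : (Multiset.range q).map (interlaceLo q lam mu) =
      (Multiset.range q).map fun j => max (lam (j + 1)) (mu j) :=
    Multiset.map_congr rfl fun j hj => if_neg (Multiset.mem_range.1 hj).ne
  have hpair := Multiset.map_min_add_map_max (Multiset.range q) (fun j => lam (j + 1)) mu
  rw [Multiset.map_range_succ', Multiset.range_succ, Multiset.map_cons, hlo,
    Multiset.map_range_succ', Multiset.range_succ, Multiset.map_cons]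
  simp only [interlaceHi, interlaceLo, if_true, Multiset.cons_add, Multiset.add_cons, hpair,
    Multiset.cons_swap (lam 0)]

lemma sum_interlaceHi_add_interlaceLo (q : ℕ) (lam mu : ℕ → ℤ) :
    ∑ j : Fin (q + 1), (interlaceHi lam mu j + interlaceLo q lam mu j) =
      ∑ i ∈ Finset.range (q + 2), lam i + ∑ i ∈ Finset.range q, mu i := by
  have h := congrArg Multiset.sum (map_interlaceHi_add_map_interlaceLo q lam mu)
  rw [Multiset.sum_add, Multiset.sum_add] at h
  rw [Fin.sum_univ_eq_sum_range (fun j => interlaceHi lam mu j + interlaceLo q lam mu j),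
    Finset.sum_add_distrib]
  exact h

lemma Rearr.eq_interleave {q : ℕ} {lam mu s : ℕ → ℤ} (hs : Rearr (q + 2) lam mu s)
    (hle : ∀ j < q + 1, interlaceLo q lam mu j ≤ interlaceHi lam mu j) :
    ∀ i < 2 * (q + 1), s i = interleave (interlaceHi lam mu) (interlaceLo q lam mu) i := by
  obtain ⟨hsorted, hperm⟩ := hs
  rw [show 2 * (q + 2) - 2 = 2 * (q + 1) by omega] at hsorted hperm
  refine hsorted.eq_of_map_range_eq
    (weaklyDecr_interleave hle fun j _ => interlaceHi_succ_le_interlaceLo (by omega)) ?_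
  rw [map_range_interleave, map_interlaceHi_add_map_interlaceLo, ← Multiset.coe_range,
    ← Multiset.coe_range, ← Multiset.coe_range, Multiset.map_coe, Multiset.map_coe,
    Multiset.map_coe, Multiset.coe_add, Multiset.coe_eq_coe]
  exact hperm

open Classical in
theorem stmt_10_general (n : ℕ) (hn : 2 ≤ n) (lam mu s : ℕ → ℤ)
    (hd : DoublyInterlaces n mu lam)
    (hs : Rearr n lam mu s) :
    (∑ κ ∈ Finset.filter
        (fun κ : Fin (n - 1) → ℤ =>
          WeaklyDecr (n - 1) (fget κ) ∧ Interlaces n (fget κ) lam ∧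
            Interlaces (n - 1) mu (fget κ))
        (Finset.Icc (fun j : Fin (n - 1) => lam ((j : ℕ) + 1))
          (fun j : Fin (n - 1) => lam (j : ℕ))),
      tMon ((∑ j : Fin (n - 1), κ j) - ∑ i ∈ Finset.range (n - 2), mu i)
        ((∑ i ∈ Finset.range n, lam i) - ∑ j : Fin (n - 1), κ j)) =
      tMon (-∑ i ∈ Finset.range (n - 2), mu i) (-∑ i ∈ Finset.range (n - 2), mu i) *
        ∏ j ∈ Finset.range (n - 1),
          ∑ y ∈ Finset.Icc (s (2 * j + 1)) (s (2 * j)),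
            tMon y (s (2 * j) + s (2 * j + 1) - y) := by
  obtain ⟨q, rfl⟩ : ∃ q, n = q + 2 := ⟨n - 2, by omega⟩
  obtain ⟨κ₀, -, hκ₀⟩ := hd
  set hi := interlaceHi lam mu
  set lo := interlaceLo q lam mu
  have hle : ∀ j < q + 1, lo j ≤ hi j := fun j hj =>
    ((interlaces_and_interlaces_iff κ₀).1 hκ₀ j hj).elim le_trans
  have hs_eq := hs.eq_interleave hle
  rw [show q + 2 - 1 = q + 1 from rfl, show q + 2 - 2 = q from rfl, filter_interlacing_eq_Icc]
  calc _ = ∑ κ ∈ Finset.Icc (fun j : Fin (q + 1) => lo j) (fun j => hi j),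
          tMon (-∑ i ∈ Finset.range q, mu i) (-∑ i ∈ Finset.range q, mu i) *
            ∏ j, tMon (κ j) (hi j + lo j - κ j) := by
        refine Finset.sum_congr rfl fun κ _ => ?_
        rw [prod_tMon, ← tMon_add, Finset.sum_sub_distrib, sum_interlaceHi_add_interlaceLo]
        congr 1 <;> ring
    _ = tMon (-∑ i ∈ Finset.range q, mu i) (-∑ i ∈ Finset.range q, mu i) *
          ∏ j ∈ Finset.range (q + 1), ∑ y ∈ Finset.Icc (lo j) (hi j), tMon y (hi j + lo j - y) := by
        rw [← Finset.mul_sum,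
          Finset.sum_Icc_prod_eq_prod_sum_Icc _ _ fun (j : Fin (q + 1)) y =>
            tMon y (hi j + lo j - y),
          Fin.prod_univ_eq_prod_range (fun j => ∑ y ∈ Finset.Icc (lo j) (hi j),
            tMon y (hi j + lo j - y))]
    _ = _ := by
        refine congrArg _ (Finset.prod_congr rfl fun j hj => ?_)
        have hj : j < q + 1 := Finset.mem_range.1 hj
        rw [hs_eq (2 * j) (by omega), hs_eq (2 * j + 1) (by omega), interleave_two_mul,
          interleave_two_mul_add_one]

open Classical in
/-- The `GL₂` character of the branching multiplicity space:
`Σ_{κ : μ ⊑ κ ⊑ λ} t₁^{|κ|-|μ|} t₂^{|λ|-|κ|}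
  = (t₁t₂)^{-|μ|} ∏_{j=1}^{n-1} Σ_{y=z_j}^{x_j} t₁^y t₂^{x_j+z_j-y}`,
as Laurent polynomials in `t₁, t₂`.  The sum on the left runs over all weakly
decreasing `κ` of length `n-1` with `μ ⊑ κ ⊑ λ` (all of which lie in the box
`Icc (fun j => λ (j+1)) (fun j => λ j)` by the interlacing condition `κ ⊑ λ`). -/
theorem stmt_10 (n : ℕ) (hn : 2 ≤ n) (lam mu s : ℕ → ℤ)
    (hlam : WeaklyDecr n lam) (hlam0 : NonnegSeq n lam)
    (hmu : WeaklyDecr (n - 2) mu) (hmu0 : NonnegSeq (n - 2) mu)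
    (hd : DoublyInterlaces n mu lam)
    (hs : Rearr n lam mu s) :
    (∑ κ ∈ Finset.filter
        (fun κ : Fin (n - 1) → ℤ =>
          WeaklyDecr (n - 1) (fget κ) ∧ Interlaces n (fget κ) lam ∧
            Interlaces (n - 1) mu (fget κ))
        (Finset.Icc (fun j : Fin (n - 1) => lam ((j : ℕ) + 1))
          (fun j : Fin (n - 1) => lam (j : ℕ))),
      tMon ((∑ j : Fin (n - 1), κ j) - ∑ i ∈ Finset.range (n - 2), mu i)
        ((∑ i ∈ Finset.range n, lam i) - ∑ j : Fin (n - 1), κ j)) =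
      tMon (-∑ i ∈ Finset.range (n - 2), mu i) (-∑ i ∈ Finset.range (n - 2), mu i) *
        ∏ j ∈ Finset.range (n - 1),
          ∑ y ∈ Finset.Icc (s (2 * j + 1)) (s (2 * j)),
            tMon y (s (2 * j) + s (2 * j + 1) - y) :=
  stmt_10_general n hn lam mu s hd hs
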